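/- Let S² = {x ∈ ℝ³ : ‖x‖ = 1} be the unit sphere and U_{S²} the uniform probability distribution on S² (normalized surface measure). Then for every symmetric matrix B ∈ ℝ^{3×3}, the entrywise integral satisfies ∫_{S²} (I − θ⊗θ)·B·(I − θ⊗θ) U_{S²}(dθ) = (7/15) B + (1/15) tr(B) · I. -/

import Mathlib

open MeasureTheory

open Real Set

def fournu : ℕ → ℕ
  | 0 => 4
  | 2 => 2
  | 4 => 3
  | _ => 0

def ee : Fin 3 → Fin 3 → ℕ := fun i l => if l = i then 1 else 0

set_option maxHeartbeats 1000000 in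
lemma key4n : ∀ i j k l' : Fin 3, (∏ l, fournu (ee i l + ee j l + ee k l + ee l' l))
    = 16 * ((if i = j then 1 else 0) * (if k = l' then 1 else 0)
        + (if i = k then 1 else 0) * (if j = l' then 1 else 0)
        + (if i = l' then 1 else 0) * (if j = k then 1 else 0)) := by decide

lemma key2n : ∀ i j : Fin 3, (∏ l, fournu (ee i l + ee j l))
    = 32 * (if i = j then 1 else 0) := by decide

lemma gamma32 : Real.Gamma (3/2) = √π / 2 := by
  have : (3/2 : ℝ) = 1/2 + 1 := by norm_num
  rw [this, Real.Gamma_add_one (by norm_num), Real.Gamma_one_half_eq]; ring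

lemma gamma52 : Real.Gamma (5/2) = 3 * √π / 4 := by
  have : (5/2 : ℝ) = 3/2 + 1 := by norm_num
  rw [this, Real.Gamma_add_one (by norm_num), gamma32]; ring

lemma gamma72 : Real.Gamma (7/2) = 15 * √π / 8 := by
  have : (7/2 : ℝ) = 5/2 + 1 := by norm_num
  rw [this, Real.Gamma_add_one (by norm_num), gamma52]; ring

/-- Radial/1D Gaussian integral on `(0,∞)`. -/
lemma ioi_int (n : ℕ) : ∫ x in Ioi (0:ℝ), x ^ n * Real.exp (-x^2)
    = (1/2) * Real.Gamma ((n+1)/2) := by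
  rw [← integral_rpow_mul_exp_neg_rpow (two_pos) (lt_of_lt_of_le neg_one_lt_zero (Nat.cast_nonneg n))]
  refine setIntegral_congr_fun measurableSet_Ioi (fun x hx => ?_)
  rw [Real.rpow_natCast, Real.rpow_two]

lemma odd_int {n : ℕ} (hn : Odd n) : ∫ x : ℝ, x ^ n * Real.exp (-x^2) = 0 := by
  have h : ∫ x : ℝ, (-x) ^ n * Real.exp (-(-x)^2) = ∫ x : ℝ, x ^ n * Real.exp (-x^2) := by
    exact (Measure.measurePreserving_neg (volume : Measure ℝ)).integral_comp'
      (f := MeasurableEquiv.neg ℝ) (fun x => x ^ n * Real.exp (-x^2))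
  have h2 : ∫ x : ℝ, (-x) ^ n * Real.exp (-(-x)^2) = - ∫ x : ℝ, x ^ n * Real.exp (-x^2) := by
    rw [← integral_neg]
    congr 1; funext x
    rw [hn.neg_pow, neg_sq]; ring
  linarith [h, h2]

lemma even_int {n : ℕ} (hn : Even n) : ∫ x : ℝ, x ^ n * Real.exp (-x^2)
    = Real.Gamma ((n+1)/2) := by
  have h : ∀ x : ℝ, x ^ n * Real.exp (-x^2) = |x| ^ n * Real.exp (-|x|^2) := fun x => by
    rw [hn.pow_abs, sq_abs]
  rw [funext h]
  rw [integral_comp_abs (f := fun t => t ^ n * Real.exp (-t^2)), ioi_int]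
  ring

lemma oneD {n : ℕ} (hn : n ≤ 4) : ∫ x : ℝ, x ^ n * Real.exp (-x^2)
    = √π * ((fournu n : ℝ)/4) := by
  interval_cases n
  · rw [even_int Even.zero]; norm_num [fournu, Real.Gamma_one_half_eq]
  · rw [odd_int odd_one]; norm_num [fournu]
  · rw [even_int (by decide)]; norm_num [fournu, gamma32]; ring
  · rw [odd_int (by decide)]; norm_num [fournu]
  · rw [even_int (by decide)]; norm_num [fournu, gamma52]; ring

local notation "E3" => EuclideanSpace ℝ (Fin 3)

lemma radial (k : ℕ) : ∫ r : Ioi (0:ℝ), (r:ℝ)^k * Real.exp (-(r:ℝ)^2) ∂(Measure.volumeIoiPow 2)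
    = ∫ r in Ioi (0:ℝ), r^(2+k) * Real.exp (-r^2) := by
  simp only [Measure.volumeIoiPow, ENNReal.ofReal]
  rw [integral_withDensity_eq_integral_smul ((measurable_subtype_coe.pow_const _).real_toNNReal)]
  rw [integral_subtype_comap measurableSet_Ioi
    (fun a : ℝ => Real.toNNReal (a^2) • (a^k * Real.exp (-a^2)))]
  refine setIntegral_congr_fun measurableSet_Ioi fun x hx => ?_
  rw [NNReal.smul_def, Real.coe_toNNReal _ (pow_nonneg hx.out.le _), smul_eq_mul, pow_add]
  ring

lemma polar (k : ℕ) (p : E3 → ℝ) (hp : ∀ (r : ℝ) (x : E3), p (r • x) = r ^ k * p x) :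
    ∫ x : E3, p x * Real.exp (-‖x‖^2)
      = (∫ θ : Metric.sphere (0:E3) 1, p θ ∂(volume : Measure E3).toSphere)
        * ∫ r in Ioi (0:ℝ), r ^ (2+k) * Real.exp (-r^2) := by
  set μ : Measure E3 := volume with hμ
  have hmp := μ.measurePreserving_homeomorphUnitSphereProd
  rw [finrank_euclideanSpace_fin] at hmp
  norm_num at hmp
  calc
    ∫ x : E3, p x * Real.exp (-‖x‖^2)
        = ∫ x : ({0}ᶜ : Set E3), p x.1 * Real.exp (-‖x.1‖^2)
            ∂(μ.comap Subtype.val) := by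
          rw [integral_subtype_comap (measurableSet_singleton 0).compl
            (fun x => p x * Real.exp (-‖x‖^2)), MeasureTheory.restrict_compl_singleton]
    _ = ∫ y : Metric.sphere (0:E3) 1 × Ioi (0:ℝ),
            p ((y.2 : ℝ) • (y.1 : E3)) * Real.exp (-(y.2:ℝ)^2)
            ∂((μ.toSphere).prod (Measure.volumeIoiPow 2)) := by
          rw [← hmp.integral_comp (Homeomorph.measurableEmbedding _)
            (fun y : Metric.sphere (0:E3) 1 × Ioi (0:ℝ) =>
              p ((y.2:ℝ) • (y.1:E3)) * Real.exp (-(y.2:ℝ)^2))]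
          refine integral_congr_ae (Filter.Eventually.of_forall fun x => ?_)
          have hx : (x : E3) ≠ 0 := x.2
          simp only [homeomorphUnitSphereProd_apply_fst_coe,
            homeomorphUnitSphereProd_apply_snd_coe]
          rw [smul_inv_smul₀ (norm_ne_zero_iff.2 hx)]
    _ = (∫ θ : Metric.sphere (0:E3) 1, p θ ∂μ.toSphere)
          * ∫ r : Ioi (0:ℝ), (r:ℝ)^k * Real.exp (-(r:ℝ)^2) ∂(Measure.volumeIoiPow 2) := by
          rw [← integral_prod_mul]
          refine integral_congr_ae (Filter.Eventually.of_forall fun y => ?_)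
          show p ((y.2:ℝ) • (y.1:E3)) * Real.exp (-(y.2:ℝ)^2)
            = p y.1 * ((y.2:ℝ)^k * Real.exp (-(y.2:ℝ)^2))
          rw [hp]; ring
    _ = _ := by rw [radial]

lemma norm_sq_eq (x : E3) : ‖x‖^2 = ∑ i, (x i)^2 := by
  rw [EuclideanSpace.norm_eq, Real.sq_sqrt (by positivity)]
  simp [sq_abs]

lemma gauss_moment (m : Fin 3 → ℕ) : ∫ x : E3, (∏ i, (x i)^(m i)) * Real.exp (-‖x‖^2)
    = ∏ i, ∫ t : ℝ, t^(m i) * Real.exp (-t^2) := by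
  have h1 : ∀ x : E3, (∏ i, (x i)^(m i)) * Real.exp (-‖x‖^2)
      = ∏ i, ((x i)^(m i) * Real.exp (-(x i)^2)) := by
    intro x
    rw [norm_sq_eq, Finset.prod_mul_distrib]
    congr 1
    rw [← Finset.sum_neg_distrib, Real.exp_sum]
  rw [funext h1]
  have h2 : ∫ x : E3, ∏ i, ((x i)^(m i) * Real.exp (-(x i)^2))
      = ∫ y : Fin 3 → ℝ, ∏ i, ((y i)^(m i) * Real.exp (-(y i)^2)) :=
    (EuclideanSpace.volume_preserving_symm_measurableEquiv_toLp (Fin 3)).integral_comp'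
      (fun y : Fin 3 → ℝ => ∏ i, ((y i)^(m i) * Real.exp (-(y i)^2)))
  rw [h2, volume_pi, MeasureTheory.integral_fintype_prod_eq_prod
    (f := fun (i : Fin 3) (t : ℝ) => t^(m i) * Real.exp (-t^2))]

lemma prod_pow_ee (x : E3) (i : Fin 3) : ∏ l, (x l)^(ee i l) = x i := by
  simp [ee, pow_ite, Finset.prod_ite_eq']

lemma mono2 (i j : Fin 3) (x : E3) : x i * x j = ∏ l, (x l)^(ee i l + ee j l) := by
  simp only [pow_add, Finset.prod_mul_distrib, prod_pow_ee]

lemma mono4 (i j k l' : Fin 3) (x : E3) :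
    x i * x j * x k * x l' = ∏ l, (x l)^(ee i l + ee j l + ee k l + ee l' l) := by
  simp only [pow_add, Finset.prod_mul_distrib, prod_pow_ee]

lemma ee_le (i l : Fin 3) : ee i l ≤ 1 := by unfold ee; split <;> omega

lemma gauss2 (i j : Fin 3) : ∫ x : E3, (x i * x j) * Real.exp (-‖x‖^2)
    = √π^3 * ((if i = j then 1 else 0)/2) := by
  rw [funext (fun x : E3 => congrArg (· * Real.exp (-‖x‖^2)) (mono2 i j x))]
  rw [gauss_moment]
  have h : ∀ l, ∫ t : ℝ, t^(ee i l + ee j l) * Real.exp (-t^2)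
      = √π * ((fournu (ee i l + ee j l) : ℝ)/4) := fun l =>
    oneD (by have := ee_le i l; have := ee_le j l; omega)
  simp only [h, Finset.prod_mul_distrib, Finset.prod_const, Finset.card_univ,
    Finset.prod_div_distrib, Fintype.card_fin]
  rw [← Nat.cast_prod, key2n i j]
  push_cast [apply_ite (Nat.cast : ℕ → ℝ)]
  ring

lemma gauss4 (i j k l' : Fin 3) : ∫ x : E3, (x i * x j * x k * x l') * Real.exp (-‖x‖^2)
    = √π^3 * (((if i = j then 1 else 0) * (if k = l' then 1 else 0)
        + (if i = k then 1 else 0) * (if j = l' then 1 else 0)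
        + (if i = l' then 1 else 0) * (if j = k then 1 else 0))/4) := by
  rw [funext (fun x : E3 => congrArg (· * Real.exp (-‖x‖^2)) (mono4 i j k l' x))]
  rw [gauss_moment]
  have h : ∀ l, ∫ t : ℝ, t^(ee i l + ee j l + ee k l + ee l' l) * Real.exp (-t^2)
      = √π * ((fournu (ee i l + ee j l + ee k l + ee l' l) : ℝ)/4) := fun l =>
    oneD (by have := ee_le i l; have := ee_le j l; have := ee_le k l; have := ee_le l' l; omega)
  simp only [h, Finset.prod_mul_distrib, Finset.prod_const, Finset.card_univ,
    Finset.prod_div_distrib, Fintype.card_fin]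
  rw [← Nat.cast_prod, key4n i j k l']
  push_cast [apply_ite (Nat.cast : ℕ → ℝ)]
  ring
/-- The uniform probability distribution on the unit sphere `S² ⊂ ℝ³`
(normalized surface measure). -/
noncomputable def uniformSphere : Measure (Metric.sphere (0 : EuclideanSpace ℝ (Fin 3)) 1) :=
  ((volume : Measure (EuclideanSpace ℝ (Fin 3))).toSphere Set.univ)⁻¹ •
    (volume : Measure (EuclideanSpace ℝ (Fin 3))).toSphere


lemma S_eq : ((volume : Measure E3).toSphere Set.univ).toReal = 4 * √π ^ 2 := by
  have h := polar 0 (fun _ => (1:ℝ)) (fun r x => by norm_num)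
  beta_reduce at h
  have h1 : ∫ x : E3, (1:ℝ) * Real.exp (-‖x‖^2) = √π ^ 3 := by
    calc ∫ x : E3, (1:ℝ) * Real.exp (-‖x‖^2)
        = ∫ x : E3, (∏ i : Fin 3, (x i)^(0:ℕ)) * Real.exp (-‖x‖^2) := by norm_num
      _ = ∏ i : Fin 3, ∫ t : ℝ, t^(0:ℕ) * Real.exp (-t^2) := gauss_moment (fun _ => 0)
      _ = √π^3 := by
          simp only [oneD (Nat.zero_le 4), Finset.prod_const, Finset.card_univ, Fintype.card_fin]
          norm_num [fournu]
  rw [h1, integral_const, ioi_int] at h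
  have hs : (0:ℝ) < √π := Real.sqrt_pos.2 Real.pi_pos
  have h2 : ((2:ℕ):ℝ) + 1 = 3 := by norm_num
  rw [h2, gamma32] at h
  rw [smul_eq_mul, mul_one] at h
  rw [measureReal_def] at h
  set S := ((volume : Measure E3).toSphere Set.univ).toReal
  field_simp at h
  nlinarith [h, hs, sq_nonneg (S - 4*√π^2)]

lemma sph_ne_zero : (volume : Measure E3).toSphere Set.univ ≠ 0 := by
  intro h0
  have h := S_eq
  rw [h0] at h
  norm_num at h
  have hs : (0:ℝ) < √π := Real.sqrt_pos.2 Real.pi_pos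
  nlinarith [h, hs]

instance : IsProbabilityMeasure uniformSphere := by
  constructor
  rw [uniformSphere, Measure.smul_apply, smul_eq_mul]
  exact ENNReal.inv_mul_cancel sph_ne_zero (measure_ne_top _ _)

lemma unif_int (f : Metric.sphere (0:E3) 1 → ℝ) :
    ∫ θ, f θ ∂uniformSphere
      = (((volume : Measure E3).toSphere Set.univ).toReal)⁻¹
          * ∫ θ, f θ ∂(volume : Measure E3).toSphere := by
  rw [uniformSphere, integral_smul_measure, ENNReal.toReal_inv, smul_eq_mul]

lemma smul_coord (r : ℝ) (x : E3) (i : Fin 3) : (r • x) i = r * x i := rfl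

lemma U2 (i j : Fin 3) : ∫ θ : Metric.sphere (0:E3) 1,
    ((θ : E3) i * (θ : E3) j) ∂uniformSphere = (if i = j then 1 else 0)/3 := by
  have hp : ∀ (r : ℝ) (x : E3), ((r • x) i) * ((r • x) j) = r^2 * (x i * x j) := by
    intro r x; rw [smul_coord, smul_coord]; ring
  have h := polar 2 (fun x : E3 => x i * x j) hp
  beta_reduce at h
  rw [gauss2, ioi_int] at h
  have h2 : ((4:ℕ):ℝ) + 1 = 5 := by norm_num
  rw [h2, gamma52] at h
  rw [unif_int, S_eq]
  have hs : (0:ℝ) < √π := Real.sqrt_pos.2 Real.pi_pos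
  set T := ∫ θ : Metric.sphere (0:E3) 1, ((θ : E3) i * (θ : E3) j) ∂(volume : Measure E3).toSphere
  set d : ℝ := if i = j then 1 else 0
  field_simp at h ⊢
  have hsq : √π ^ 2 = π := Real.sq_sqrt Real.pi_pos.le
  refine mul_right_cancel₀ (ne_of_gt hs) ?_
  linear_combination (-√π) * h

lemma U4 (i j k l' : Fin 3) : ∫ θ : Metric.sphere (0:E3) 1,
    ((θ : E3) i * (θ : E3) j * (θ : E3) k * (θ : E3) l') ∂uniformSphere
    = ((if i = j then 1 else 0) * (if k = l' then 1 else 0)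
        + (if i = k then 1 else 0) * (if j = l' then 1 else 0)
        + (if i = l' then 1 else 0) * (if j = k then 1 else 0))/15 := by
  have hp : ∀ (r : ℝ) (x : E3), ((r • x) i) * ((r • x) j) * ((r • x) k) * ((r • x) l')
      = r^4 * (x i * x j * x k * x l') := by
    intro r x; rw [smul_coord, smul_coord, smul_coord, smul_coord]; ring
  have h := polar 4 (fun x : E3 => x i * x j * x k * x l') hp
  beta_reduce at h
  rw [gauss4, ioi_int] at h
  have h2 : ((6:ℕ):ℝ) + 1 = 7 := by norm_num
  rw [h2, gamma72] at h
  rw [unif_int, S_eq]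
  have hs : (0:ℝ) < √π := Real.sqrt_pos.2 Real.pi_pos
  set T := ∫ θ : Metric.sphere (0:E3) 1,
    ((θ : E3) i * (θ : E3) j * (θ : E3) k * (θ : E3) l') ∂(volume : Measure E3).toSphere
  set D : ℝ := (if i = j then 1 else 0) * (if k = l' then 1 else 0)
        + (if i = k then 1 else 0) * (if j = l' then 1 else 0)
        + (if i = l' then 1 else 0) * (if j = k then 1 else 0)
  field_simp at h ⊢
  have hsq : √π ^ 2 = π := Real.sq_sqrt Real.pi_pos.le
  refine mul_right_cancel₀ (ne_of_gt hs) ?_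
  linear_combination (-√π/4) * h

lemma contco (i : Fin 3) : Continuous fun θ : Metric.sphere (0:E3) 1 => (θ:E3) i := by
  exact (continuous_apply i).comp ((PiLp.continuous_ofLp _ _).comp continuous_subtype_val)

lemma integ {f : Metric.sphere (0:E3) 1 → ℝ} (hf : Continuous f) :
    Integrable f uniformSphere :=
  hf.integrable_of_hasCompactSupport ((isClosed_tsupport f).isCompact)

lemma i2 (p q : Fin 3) :
    Integrable (fun θ : Metric.sphere (0:E3) 1 => (θ:E3) p * (θ:E3) q) uniformSphere :=
  integ ((contco p).mul (contco q))

lemma i4 (p q r s : Fin 3) :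
    Integrable (fun θ : Metric.sphere (0:E3) 1 => (θ:E3) p * (θ:E3) q * (θ:E3) r * (θ:E3) s)
      uniformSphere :=
  integ ((((contco p).mul (contco q)).mul (contco r)).mul (contco s))

lemma term_int (β : ℝ) (a b c c' : Fin 3) :
    ∫ θ : Metric.sphere (0:E3) 1,
        ((if a = c then (1:ℝ) else 0) - (θ:E3) a * (θ:E3) c) * β *
          ((if c' = b then (1:ℝ) else 0) - (θ:E3) c' * (θ:E3) b) ∂uniformSphere
      = β * ((2/5) * ((if a = c then (1:ℝ) else 0) * (if c' = b then (1:ℝ) else 0))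
          + ((if a = c' then (1:ℝ) else 0) * (if c = b then (1:ℝ) else 0)
            + (if a = b then (1:ℝ) else 0) * (if c = c' then (1:ℝ) else 0))/15) := by
  set d1 : ℝ := if a = c then 1 else 0 with hd1
  set d2 : ℝ := if c' = b then 1 else 0 with hd2
  have hrw : (fun θ : Metric.sphere (0:E3) 1 =>
      (d1 - (θ:E3) a * (θ:E3) c) * β * (d2 - (θ:E3) c' * (θ:E3) b))
      = fun θ : Metric.sphere (0:E3) 1 =>
        ((β * (d1 * d2) - (β * d1) * ((θ:E3) c' * (θ:E3) b))
          - (β * d2) * ((θ:E3) a * (θ:E3) c))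
          + β * ((θ:E3) a * (θ:E3) c * (θ:E3) c' * (θ:E3) b) := by
    funext θ; ring
  have hI1 : Integrable (fun _ : Metric.sphere (0:E3) 1 => β * (d1 * d2)) uniformSphere :=
    integrable_const _
  have hI2 : Integrable (fun θ : Metric.sphere (0:E3) 1 =>
      (β * d1) * ((θ:E3) c' * (θ:E3) b)) uniformSphere := (i2 c' b).const_mul _
  have hI3 : Integrable (fun θ : Metric.sphere (0:E3) 1 =>
      (β * d2) * ((θ:E3) a * (θ:E3) c)) uniformSphere := (i2 a c).const_mul _
  have hI4 : Integrable (fun θ : Metric.sphere (0:E3) 1 =>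
      β * ((θ:E3) a * (θ:E3) c * (θ:E3) c' * (θ:E3) b)) uniformSphere := by
    have := (i4 a c c' b).const_mul β
    exact this
  have hI12 : Integrable (fun θ : Metric.sphere (0:E3) 1 =>
      β * (d1 * d2) - (β * d1) * ((θ:E3) c' * (θ:E3) b)) uniformSphere := hI1.sub hI2
  have hI123 : Integrable (fun θ : Metric.sphere (0:E3) 1 =>
      β * (d1 * d2) - (β * d1) * ((θ:E3) c' * (θ:E3) b)
        - (β * d2) * ((θ:E3) a * (θ:E3) c)) uniformSphere := hI12.sub hI3
  rw [hrw, integral_add hI123 hI4, integral_sub hI12 hI3, integral_sub hI1 hI2,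
    integral_const, integral_const_mul, integral_const_mul, integral_const_mul,
    U2, U2, U4, probReal_univ]
  simp only [ENNReal.toReal_one, one_smul]
  rw [← hd1, ← hd2]
  ring

/-- For every symmetric `B ∈ ℝ^{3×3}`, entrywise,
`∫_{S²} (I − θ⊗θ)·B·(I − θ⊗θ) U_{S²}(dθ) = (7/15) B + (1/15) tr(B) · I`. -/
theorem stmt16 (B : Matrix (Fin 3) (Fin 3) ℝ) (hB : B.IsSymm) :
    ∀ a b : Fin 3,
      (∫ θ : Metric.sphere (0 : EuclideanSpace ℝ (Fin 3)) 1,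
          ∑ c : Fin 3, ∑ c' : Fin 3,
            ((if a = c then (1 : ℝ) else 0) -
                (θ : EuclideanSpace ℝ (Fin 3)) a * (θ : EuclideanSpace ℝ (Fin 3)) c) *
              B c c' *
              ((if c' = b then (1 : ℝ) else 0) -
                (θ : EuclideanSpace ℝ (Fin 3)) c' * (θ : EuclideanSpace ℝ (Fin 3)) b)
          ∂uniformSphere) =
        (7 / 15) * B a b + (1 / 15) * (∑ c : Fin 3, B c c) * (if a = b then 1 else 0) := by
  intro a b
  have hterm : ∀ c c' : Fin 3, Integrable (fun θ : Metric.sphere (0:E3) 1 =>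
      ((if a = c then (1 : ℝ) else 0) - (θ:E3) a * (θ:E3) c) * B c c' *
        ((if c' = b then (1 : ℝ) else 0) - (θ:E3) c' * (θ:E3) b)) uniformSphere := by
    intro c c'
    exact integ (((continuous_const.sub ((contco a).mul (contco c))).mul
      continuous_const).mul (continuous_const.sub ((contco c').mul (contco b))))
  rw [integral_finset_sum _ (fun c _ => integrable_finset_sum _ (fun c' _ => hterm c c'))]
  have hinner : ∀ c : Fin 3, ∫ θ : Metric.sphere (0:E3) 1,
      ∑ c' : Fin 3, ((if a = c then (1 : ℝ) else 0) - (θ:E3) a * (θ:E3) c) * B c c' *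
        ((if c' = b then (1 : ℝ) else 0) - (θ:E3) c' * (θ:E3) b) ∂uniformSphere
      = ∑ c' : Fin 3, B c c' * ((2/5) * ((if a = c then (1:ℝ) else 0) * (if c' = b then (1:ℝ) else 0))
          + ((if a = c' then (1:ℝ) else 0) * (if c = b then (1:ℝ) else 0)
            + (if a = b then (1:ℝ) else 0) * (if c = c' then (1:ℝ) else 0))/15) := by
    intro c
    rw [integral_finset_sum _ (fun c' _ => hterm c c')]
    exact Finset.sum_congr rfl fun c' _ => term_int (B c c') a b c c'
  rw [Finset.sum_congr rfl fun c _ => hinner c]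
  have hs : ∀ p q : Fin 3, B q p = B p q := fun p q => congrFun (congrFun hB p) q
  fin_cases a <;> fin_cases b <;>
    simp [Fin.sum_univ_three] <;> norm_num <;>
    linarith [hs 0 1, hs 0 2, hs 1 2, hs 1 0, hs 2 0, hs 2 1]
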